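/- Let A ⊆ (0,1], Y : A → ℕ injective, and (M, d) as above with M = A ∪ {0}. Then (M, d) is countably compact: every countable cover of M by open balls B(a_n, r_n), n ∈ ℕ, has a finite subcover. -/
import Mathlib


theorem M_countably_compact (A : Set ℝ) (hA : A ⊆ Set.Ioc (0:ℝ) 1)
    (Y : ℝ → ℕ) (hY : Set.InjOn Y A)
    (M : Set ℝ) (hM : M = A ∪ {0})
    (d : ℝ → ℝ → ℝ)
    (hd : ∀ x ∈ M, ∀ y ∈ M, d x y =
      if x = 0 ∧ y = 0 then 0
      else if x = 0 then ((1:ℝ)/2) ^ Y y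
      else if y = 0 then ((1:ℝ)/2) ^ Y x
      else |((1:ℝ)/2) ^ Y x - ((1:ℝ)/2) ^ Y y|) :
    ∀ (a : ℕ → ℝ) (r : ℕ → ℚ), (∀ n, a n ∈ M) →
      (∀ x ∈ M, ∃ n : ℕ, d (a n) x < (r n : ℝ)) →
      ∃ m : ℕ, ∀ x ∈ M, ∃ n ≤ m, d (a n) x < (r n : ℝ) := by
  intro a r ha hcov
  subst hM
  have h0M : (0:ℝ) ∈ A ∪ {0} := Or.inr rfl
  obtain ⟨n₀, hn₀⟩ := hcov 0 h0M
  have haM := ha n₀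
  have hd0 : d (a n₀) 0 = if a n₀ = 0 then 0 else ((1:ℝ)/2)^(Y (a n₀)) := by
    rw [hd _ haM _ h0M]; by_cases h : a n₀ = 0 <;> simp [h]
  have hrpos : (0:ℝ) < r n₀ := by
    refine lt_of_le_of_lt ?_ hn₀
    rw [hd0]; split <;> positivity
  have hkey : ∀ x ∈ A ∪ ({0}:Set ℝ), (x = 0 ∨ ((1:ℝ)/2)^(Y x) < r n₀) →
      d (a n₀) x < r n₀ := by
    intro x hx hcase
    rw [hd _ haM _ hx]
    have hu : ¬ a n₀ = 0 → ((1:ℝ)/2)^(Y (a n₀)) < r n₀ := by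
      intro h; rwa [hd0, if_neg h] at hn₀
    by_cases h1 : a n₀ = 0 <;> by_cases h2 : x = 0 <;> simp only [h1, h2,
      if_true, if_false, and_true, and_false, true_and, false_and, if_pos, if_neg,
      not_false_iff, ite_true, ite_false]
    · exact hrpos
    · rcases hcase with h | h
      · exact absurd h h2
      · exact h
    · exact hu h1
    · rcases hcase with h | h
      · exact absurd h h2
      · rw [abs_sub_lt_iff]
        have p1 : (0:ℝ) < ((1:ℝ)/2)^(Y x) := by positivity
        have p2 : (0:ℝ) < ((1:ℝ)/2)^(Y (a n₀)) := by positivity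
        constructor
        · linarith [hu h1]
        · linarith
  set S := {x | x ∈ A ∧ ((r n₀ : ℝ)) ≤ ((1:ℝ)/2)^(Y x)} with hSdef
  have hSfin : S.Finite := by
    obtain ⟨N, hN⟩ := exists_pow_lt_of_lt_one hrpos (by norm_num : (1:ℝ)/2 < 1)
    have himg : Y '' S ⊆ Set.Iic N := by
      rintro _ ⟨x, hx, rfl⟩
      by_contra h
      simp only [Set.mem_Iic, not_le] at h
      have : ((1:ℝ)/2)^(Y x) < ((1:ℝ)/2)^N := by
        apply pow_lt_pow_right_of_lt_one₀ (by norm_num) (by norm_num) h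
      linarith [hx.2, hN]
    exact Set.Finite.of_finite_image ((Set.finite_Iic N).subset himg)
      (hY.mono (fun x hx => hx.1))
  classical
  let f : ℝ → ℕ := fun x => if h : x ∈ A ∪ ({0}:Set ℝ) then (hcov x h).choose else 0
  refine ⟨max n₀ (hSfin.toFinset.sup f), ?_⟩
  intro x hx
  by_cases hv : ((1:ℝ)/2)^(Y x) < r n₀
  · exact ⟨n₀, le_max_left _ _, hkey x hx (Or.inr hv)⟩
  · rcases hx with hxA | hx0
    · have hxS : x ∈ S := ⟨hxA, le_of_not_gt hv⟩
      refine ⟨f x, le_trans (Finset.le_sup (hSfin.mem_toFinset.mpr hxS))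
        (le_max_right _ _), ?_⟩
      have hxM : x ∈ A ∪ ({0}:Set ℝ) := Or.inl hxA
      simp only [f, dif_pos hxM]
      exact (hcov x hxM).choose_spec
    · exact ⟨n₀, le_max_left _ _, hkey x (Or.inr hx0) (Or.inl hx0)⟩
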